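/- arXiv:1707.02481 — 6 statements merged into one kernel-verified Lean document; each statement's English description precedes it below -/
import Mathlib

section
/- Let T be a tree with at least three nodes, and define v ~ w iff lk(v) ⊆ st(w) and lk(w) ⊆ st(v). Then for distinct vertices v, w: v ~ w if and only if both v and w are leaves and there exists a vertex u with v, w ∈ lk(u). -/
open SimpleGraph

private lemma two_path_ne {V : Type*} {T : SimpleGraph V} (hT : T.IsAcyclic)
    {v w u₁ u₂ : V} (h1 : T.Adj v u₁) (h2 : T.Adj u₁ w)
    (h3 : T.Adj v u₂) (h4 : T.Adj u₂ w) (hvw : v ≠ w) (hnadj : ¬ T.Adj v w) :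
    u₁ = u₂ := by
  classical
  rw [isAcyclic_iff_path_unique] at hT
  have hu1w : u₁ ≠ w := fun h => hnadj (h ▸ h1)
  have hu2w : u₂ ≠ w := fun h => hnadj (h ▸ h3)
  have heq := hT ⟨Walk.cons h1 (Walk.cons h2 Walk.nil), by
    simp [Walk.isPath_def, h1.ne, hvw, hu1w]⟩ ⟨Walk.cons h3 (Walk.cons h4 Walk.nil), by
    simp [Walk.isPath_def, h3.ne, hvw, hu2w]⟩
  have := congrArg (fun p : T.Path v w => p.1.support) heq
  simpa using this

private lemma no_triangle {V : Type*} {T : SimpleGraph V} (hT : T.IsAcyclic)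
    {v w x : V} (hvw : T.Adj v w) (hvx : T.Adj v x) (hxw : T.Adj x w) : False := by
  classical
  rw [isAcyclic_iff_path_unique] at hT
  have heq := hT ⟨Walk.cons hvw Walk.nil, by simp [Walk.isPath_def, hvw.ne]⟩
    ⟨Walk.cons hvx (Walk.cons hxw Walk.nil), by
    simp [Walk.isPath_def, hvx.ne, hvw.ne, hxw.ne]⟩
  have := congrArg (fun p : T.Path v w => p.1.length) heq
  simp at this

private lemma exists_neighbor {V : Type*} [Fintype V] {T : SimpleGraph V}
    (hc : T.Connected) (hcard : 2 ≤ Fintype.card V) (v : V) :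
    ∃ u, T.Adj v u := by
  obtain ⟨x, hx⟩ := Fintype.exists_ne_of_one_lt_card (by omega) v
  obtain ⟨p⟩ := hc.preconnected v x
  cases p with
  | nil => exact absurd rfl hx.symm
  | cons h _ => exact ⟨_, h⟩

/-- In a tree with at least three nodes, for distinct `v, w`:
`lk(v) ⊆ st(w)` and `lk(w) ⊆ st(v)` iff both are leaves with a common neighbor. -/
theorem stmt_1 {V : Type*} [Fintype V] [DecidableEq V]
    (T : SimpleGraph V) [DecidableRel T.Adj]
    (hT : T.IsTree) (hcard : 3 ≤ Fintype.card V) (v w : V) (hvw : v ≠ w) :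
    (T.neighborSet v ⊆ insert w (T.neighborSet w) ∧
      T.neighborSet w ⊆ insert v (T.neighborSet v)) ↔
      (T.degree v = 1 ∧ T.degree w = 1 ∧ ∃ u, T.Adj u v ∧ T.Adj u w) := by
  classical
  have hconn := hT.isConnected
  have hac := hT.IsAcyclic
  constructor
  · rintro ⟨h1, h2⟩
    -- v and w are not adjacent
    have hnadj : ¬ T.Adj v w := by
      intro hadj
      -- then lk v ⊆ {w} and lk w ⊆ {v}
      have hlv : ∀ x, T.Adj v x → x = w := by
        intro x hx
        by_contra hxw
        have : x ∈ insert w (T.neighborSet w) := h1 hx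
        rcases this with h | h
        · exact hxw h
        · exact no_triangle hac hadj hx ((h : T.Adj w x).symm)
      have hlw : ∀ x, T.Adj w x → x = v := by
        intro x hx
        by_contra hxv
        have : x ∈ insert v (T.neighborSet v) := h2 hx
        rcases this with h | h
        · exact hxv h
        · exact no_triangle hac hadj.symm hx ((h : T.Adj v x).symm)
      -- but there is a third vertex
      obtain ⟨z, hzv, hzw⟩ : ∃ z, z ≠ v ∧ z ≠ w := by
        by_contra hcon
        push_neg at hcon
        have : Fintype.card V ≤ 2 := by
          have : (Finset.univ : Finset V) ⊆ {v, w} := by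
            intro z _
            rcases em (z = v) with h | h
            · simp [h]
            · simp [hcon z h]
          calc Fintype.card V ≤ ({v, w} : Finset V).card := Finset.card_le_card this
            _ ≤ 2 := Finset.card_insert_le _ _ |>.trans (by simp)
        omega
      have key : ∀ {a x : V} (p : T.Walk a x), (a = v ∨ a = w) → (x = v ∨ x = w) := by
        intro a x p
        induction p with
        | nil => exact id
        | cons h q ih =>
          intro ha
          apply ih
          rcases ha with rfl | rfl
          · exact Or.inr (hlv _ h)
          · exact Or.inl (hlw _ h)
      obtain ⟨p⟩ := hconn.preconnected v z
      rcases key p (Or.inl rfl) with h | h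
      · exact hzv h
      · exact hzw h
    -- so the neighbor sets coincide
    have heq : T.neighborSet v = T.neighborSet w := by
      ext x
      constructor
      · intro hx
        rcases h1 hx with h | h
        · exact absurd (h ▸ hx) hnadj
        · exact h
      · intro hx
        rcases h2 hx with h | h
        · exact absurd (h ▸ hx) (fun h' => hnadj h'.symm)
        · exact h
    obtain ⟨u, hu⟩ := exists_neighbor hconn (by omega) v
    have huw : T.Adj w u := by
      have : u ∈ T.neighborSet w := heq ▸ (hu : u ∈ T.neighborSet v)
      exact this
    have huniq : ∀ x, T.Adj v x → x = u := by
      intro x hx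
      have hxw : T.Adj w x := by
        have : x ∈ T.neighborSet w := heq ▸ (hx : x ∈ T.neighborSet v)
        exact this
      exact two_path_ne hac hx hxw.symm hu huw.symm hvw hnadj
    have huniqw : ∀ x, T.Adj w x → x = u := by
      intro x hx
      have hxv : T.Adj v x := by
        have : x ∈ T.neighborSet v := heq.symm ▸ (hx : x ∈ T.neighborSet w)
        exact this
      exact huniq x hxv
    refine ⟨?_, ?_, u, hu.symm, huw.symm⟩
    · rw [← T.card_neighborFinset_eq_degree]
      rw [Finset.card_eq_one]
      exact ⟨u, Finset.eq_singleton_iff_unique_mem.mpr ⟨by simpa using hu,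
        fun x hx => huniq x (by simpa using hx)⟩⟩
    · rw [← T.card_neighborFinset_eq_degree]
      rw [Finset.card_eq_one]
      exact ⟨u, Finset.eq_singleton_iff_unique_mem.mpr ⟨by simpa using huw,
        fun x hx => huniqw x (by simpa using hx)⟩⟩
  · rintro ⟨hdv, hdw, u, huv, huw⟩
    have hv1 : ∀ x, T.Adj v x → x = u := by
      intro x hx
      have hcard1 : (T.neighborFinset v).card ≤ 1 := by
        rw [T.card_neighborFinset_eq_degree, hdv]
      exact Finset.card_le_one.mp hcard1 x (by simpa using hx) u (by simpa using huv.symm)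
    have hw1 : ∀ x, T.Adj w x → x = u := by
      intro x hx
      have hcard1 : (T.neighborFinset w).card ≤ 1 := by
        rw [T.card_neighborFinset_eq_degree, hdw]
      exact Finset.card_le_one.mp hcard1 x (by simpa using hx) u (by simpa using huw.symm)
    constructor
    · intro x hx
      have := hv1 x hx
      subst this
      exact Set.mem_insert_of_mem _ huw.symm
    · intro x hx
      have := hw1 x hx
      subst this
      exact Set.mem_insert_of_mem _ huv.symm
end

section
/- Let T be a finite tree and a a vertex of T. The number of connected components of the induced subgraph T \ st(a) equals the sum over c ∈ lk(a) of (deg(c) − 1). -/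
/-!
The components of `T \ st(a)` are in bijection with the edges `cw` with `c ∈ lk(a)` and
`w ≠ a`, via `cw ↦ [w]`. Since a tree has no triangles, `w ∉ st(a)`. For `x ∉ st(a)`, the
path from `a` to `x` reads `a, c, w, …, x` and leaves `st(a)` for good after `c`, which gives
surjectivity; two such edges in one component would give two paths from `a`, which gives
injectivity. The edges at `c` contribute `deg c - 1`.
-/

open Finset SimpleGraph

namespace SimpleGraph

variable {V : Type*} {T : SimpleGraph V}

/-- The closed neighbourhood, written `st(v)`. -/
def closedNeighborSet (T : SimpleGraph V) (v : V) : Set V := insert v (T.neighborSet v)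

@[simp] lemma mem_closedNeighborSet {v w : V} :
    w ∈ T.closedNeighborSet v ↔ w = v ∨ T.Adj v w :=
  Iff.rfl

lemma reachable_induce_iff {s : Set V} {u v : s} :
    (T.induce s).Reachable u v ↔ ∃ p : T.Walk u v, p.IsPath ∧ ∀ x ∈ p.support, x ∈ s := by
  classical
  constructor
  · rintro ⟨W⟩
    have hs : ∀ {x y : s} (p : (T.induce s).Walk x y),
        ∀ z ∈ (p.map (Embedding.induce s).toHom).support, z ∈ s := by
      intro x y p z hz
      obtain ⟨y, -, rfl⟩ := List.mem_map.1 (p.support_map _ ▸ hz)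
      exact y.2
    exact ⟨_, W.bypass_isPath.map (Embedding.induce (G := T) s).injective, hs _⟩
  · rintro ⟨p, -, hp⟩
    exact ⟨p.induce s hp⟩

lemma IsAcyclic.notMem_closedNeighborSet_of_adj_of_adj (hT : T.IsAcyclic) {a c w : V}
    (hac : T.Adj a c) (hcw : T.Adj c w) (hwa : w ≠ a) : w ∉ T.closedNeighborSet a := by
  classical
  rintro (rfl | haw)
  · exact hwa rfl
  · exact hT.cliqueFree le_rfl {a, c, w} (is3Clique_triple_iff.2 ⟨hac, haw, hcw⟩)

lemma IsAcyclic.eq_of_reachable_induce_compl_closedNeighborSet (hT : T.IsAcyclic)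
    {a c c' w w' : V} (hac : T.Adj a c) (hcw : T.Adj c w) (hac' : T.Adj a c')
    (hcw' : T.Adj c' w') (hw : w ∈ (T.closedNeighborSet a)ᶜ) (hw' : w' ∈ (T.closedNeighborSet a)ᶜ)
    (h : (T.induce (T.closedNeighborSet a)ᶜ).Reachable ⟨w, hw⟩ ⟨w', hw'⟩) : c = c' ∧ w = w' := by
  obtain ⟨q, hq, hqs⟩ := reachable_induce_iff.1 h
  have hlong : (Walk.cons hac (Walk.cons hcw q)).IsPath := by
    simp only [Walk.cons_isPath_iff, Walk.support_cons, List.mem_cons, not_or]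
    exact ⟨⟨hq, fun hc => hqs c hc (by simp [hac])⟩, hac.ne, fun ha => hqs a ha (by simp)⟩
  have hshort : (Walk.cons hac' (Walk.cons hcw' Walk.nil)).IsPath := by
    have haw' : a ≠ w' := by rintro rfl; exact hw' (by simp)
    simp [hac'.ne, hcw'.ne, haw']
  have heq := congrArg (fun p : T.Path a w' => p.1.support)
    ((hT.subsingleton_path a w').elim ⟨_, hlong⟩ ⟨_, hshort⟩)
  simp only [Walk.support_cons, Walk.support_nil, List.cons.injEq] at heq
  exact ⟨heq.2.1, List.mem_singleton.1 (heq.2.2 ▸ q.start_mem_support)⟩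

lemma IsTree.exists_reachable_induce_compl_closedNeighborSet (hT : T.IsTree) {a x : V}
    (hx : x ∈ (T.closedNeighborSet a)ᶜ) :
    ∃ c w, ∃ hw : w ∈ (T.closedNeighborSet a)ᶜ, T.Adj a c ∧ T.Adj c w ∧
      (T.induce (T.closedNeighborSet a)ᶜ).Reachable ⟨w, hw⟩ ⟨x, hx⟩ := by
  obtain ⟨p, hp, -⟩ := hT.existsUnique_path a x
  cases p with
  | nil => exact absurd (by simp) hx
  | @cons _ c _ hac q =>
    cases q with
    | nil => exact absurd (by simp [hac]) hx
    | @cons _ w _ hcw r =>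
      have hr : ∀ y ∈ r.support, y ∈ (T.closedNeighborSet a)ᶜ := by
        rintro y hy (rfl | hay)
        · exact ((Walk.cons_isPath_iff _ _).1 hp).2 (by simp [hy])
        · have hyc : y = c := hT.isAcyclic.eq_snd_of_adj_start hp hay (by simp [hy])
          exact ((Walk.cons_isPath_iff _ _).1 hp.of_cons).2 (hyc ▸ hy)
      exact ⟨c, w, hr w r.start_mem_support, hac, hcw,
        reachable_induce_iff.2 ⟨r, hp.of_cons.of_cons, hr⟩⟩

lemma IsTree.card_connectedComponent_induce_compl_closedNeighborSet [Fintype V] [DecidableEq V]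
    [DecidableRel T.Adj] (hT : T.IsTree) (a : V) :
    Nat.card (T.induce (T.closedNeighborSet a)ᶜ).ConnectedComponent =
      #((T.neighborFinset a).sigma fun c => (T.neighborFinset c).erase a) := by
  have hout : ∀ p ∈ (T.neighborFinset a).sigma fun c => (T.neighborFinset c).erase a,
      p.2 ∈ (T.closedNeighborSet a)ᶜ := by
    simp only [mem_sigma, mem_neighborFinset, mem_erase]
    exact fun p ⟨hac, hwa, hcw⟩ =>
      hT.isAcyclic.notMem_closedNeighborSet_of_adj_of_adj hac hcw hwa
  let f : ((T.neighborFinset a).sigma fun c => (T.neighborFinset c).erase a) →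
      (T.induce (T.closedNeighborSet a)ᶜ).ConnectedComponent :=
    fun p => connectedComponentMk _ ⟨p.1.2, hout p.1 p.2⟩
  rw [← Nat.card_eq_finsetCard, Nat.card_eq_of_bijective f]
  constructor
  · rintro ⟨⟨c, w⟩, hcw⟩ ⟨⟨c', w'⟩, hcw'⟩ h
    simp only [mem_sigma, mem_neighborFinset, mem_erase] at hcw hcw'
    obtain ⟨rfl, rfl⟩ := hT.isAcyclic.eq_of_reachable_induce_compl_closedNeighborSet
      hcw.1 hcw.2.2 hcw'.1 hcw'.2.2 _ _ (ConnectedComponent.exact h)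
    rfl
  · refine ConnectedComponent.ind fun ⟨x, hx⟩ => ?_
    obtain ⟨c, w, hw, hac, hcw, hreach⟩ :=
      hT.exists_reachable_induce_compl_closedNeighborSet hx
    refine ⟨⟨⟨c, w⟩, ?_⟩, ConnectedComponent.sound hreach⟩
    simp only [mem_sigma, mem_neighborFinset, mem_erase]
    exact ⟨hac, fun hwa => hw (by simp [hwa]), hcw⟩

end SimpleGraph

/-- In a finite tree, the number of connected components of `T \ st(a)` equals
`∑_{c ∈ lk(a)} (deg c − 1)`. -/
theorem stmt_2 {V : Type*} [Fintype V] [DecidableEq V]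
    (T : SimpleGraph V) [DecidableRel T.Adj]
    (hT : T.IsTree) (a : V) :
    Nat.card ((T.induce (insert a (T.neighborSet a))ᶜ).ConnectedComponent) =
      ∑ c ∈ T.neighborFinset a, (T.degree c - 1) := by
  refine (hT.card_connectedComponent_induce_compl_closedNeighborSet a).trans ?_
  rw [card_sigma]
  refine sum_congr rfl fun c hc => ?_
  rw [card_erase_of_mem ((T.mem_neighborFinset _ _).2 ((T.mem_neighborFinset _ _).1 hc).symm),
    card_neighborFinset_eq_degree]
end

section
/- Let h and f be functions holomorphic on a neighborhood of 0 with f(0) ≠ 0, satisfying h(z) = z·f(h(z)) near 0 (so h(0) = 0). Then for any function g holomorphic at 0 and any n ≥ 1, the n-th Taylor coefficient of g(h(z)) at 0 equals the (n−1)-st Taylor coefficient of g'(z)·f(z)^n/n. -/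
/-!
Put `u = f ∘ h`, so that `h = z·u` near `0`. The heart of the proof is that for analytic `w`,
`coef_N (w(h)·h'·u^{-(N+1)}) = coef_N w`. Writing `w = w(0) + z·w₁` and `h = z·u` peels one
power of `z` off the left-hand side, so by induction on `N` this reduces to
`coef_N (h'·u^{-(N+1)}) = 0` for `N ≥ 1`, the vanishing of the residue of `h'/h^{N+1}`.
For `g` analytic, `w = g'·f^{N+1}` gives `w(h)·h'·u^{-(N+1)} = g'(h)·h' = (g ∘ h)'`, whose
`N`-th coefficient is `(N+1)·coef_{N+1}(g ∘ h)`.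
-/

open scoped Nat
open Filter Topology

namespace LagrangeInversion

variable {𝕜 : Type*} [NontriviallyNormedField 𝕜]

noncomputable def taylorCoeff (f : 𝕜 → 𝕜) (k : ℕ) : 𝕜 := iteratedDeriv k f 0 / k !

theorem taylorCoeff_congr {f g : 𝕜 → 𝕜} (hfg : f =ᶠ[𝓝 0] g) (k : ℕ) :
    taylorCoeff f k = taylorCoeff g k := by
  rw [taylorCoeff, taylorCoeff, hfg.iteratedDeriv_eq]

theorem taylorCoeff_zero (f : 𝕜 → 𝕜) : taylorCoeff f 0 = f 0 := by
  simp [taylorCoeff]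

theorem taylorCoeff_add {f g : 𝕜 → 𝕜} {k : ℕ} (hf : ContDiffAt 𝕜 k f 0)
    (hg : ContDiffAt 𝕜 k g 0) :
    taylorCoeff (fun z => f z + g z) k = taylorCoeff f k + taylorCoeff g k := by
  rw [taylorCoeff, iteratedDeriv_fun_add hf hg, add_div]
  rfl

theorem taylorCoeff_const_mul (c : 𝕜) (f : 𝕜 → 𝕜) (k : ℕ) :
    taylorCoeff (fun z => c * f z) k = c * taylorCoeff f k := by
  simp only [taylorCoeff, iteratedDeriv_const_mul_field, mul_div_assoc]

theorem taylorCoeff_const_add (c : 𝕜) (f : 𝕜 → 𝕜) (k : ℕ) :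
    taylorCoeff (fun z => c + f z) (k + 1) = taylorCoeff f (k + 1) := by
  rw [taylorCoeff, iteratedDeriv_const_add k.succ_pos]
  rfl

theorem deriv_eventuallyEq_of_eventuallyEq_id_mul {h u : 𝕜 → 𝕜}
    (hu : ∀ᶠ z in 𝓝 0, DifferentiableAt 𝕜 u z) (hhu : h =ᶠ[𝓝 0] fun z => z * u z) :
    deriv h =ᶠ[𝓝 0] fun z => u z + z * deriv u z := by
  filter_upwards [hhu.deriv, hu] with z hz hu
  rw [hz, deriv_fun_mul differentiableAt_fun_id hu, deriv_id'', one_mul]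

variable [CharZero 𝕜]

theorem taylorCoeff_deriv (f : 𝕜 → 𝕜) (k : ℕ) :
    taylorCoeff (deriv f) k = (k + 1) * taylorCoeff f (k + 1) := by
  rw [taylorCoeff, taylorCoeff, ← iteratedDeriv_succ', Nat.factorial_succ]
  push_cast
  field_simp

theorem taylorCoeff_id_mul {f : 𝕜 → 𝕜} {k : ℕ} (hf : ContDiffAt 𝕜 (k + 1) f 0) :
    taylorCoeff (fun z => z * f z) (k + 1) = taylorCoeff f k := by
  rw [taylorCoeff, iteratedDeriv_fun_mul (f := fun z => z) contDiffAt_fun_id hf,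
    Finset.sum_eq_single 1 (by intro i _ hi; simp [iteratedDeriv_fun_id_zero, hi]) (by simp),
    taylorCoeff, Nat.factorial_succ]
  simp only [Nat.choose_one_right, Nat.cast_add, Nat.cast_one, iteratedDeriv_fun_id_zero,
    ↓reduceIte, mul_one, add_tsub_cancel_right, Nat.cast_mul]
  field_simp

variable [CompleteSpace 𝕜]

theorem taylorCoeff_id_mul_deriv {f : 𝕜 → 𝕜} (hf : AnalyticAt 𝕜 f 0) (k : ℕ) :
    taylorCoeff (fun z => z * deriv f z) k = k * taylorCoeff f k := by
  cases k with
  | zero => simp [taylorCoeff_zero]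
  | succ k =>
    rw [taylorCoeff_id_mul hf.deriv.contDiffAt, taylorCoeff_deriv]
    push_cast
    ring

theorem taylorCoeff_deriv_mul_inv_pow_eq_zero {h u : 𝕜 → 𝕜} (hu : AnalyticAt 𝕜 u 0)
    (hu0 : u 0 ≠ 0) (hhu : h =ᶠ[𝓝 0] fun z => z * u z) {j : ℕ} (hj : j ≠ 0) :
    taylorCoeff (fun z => deriv h z * (u z)⁻¹ ^ (j + 1)) j = 0 := by
  have hh' := deriv_eventuallyEq_of_eventuallyEq_id_mul
    (hu.eventually_analyticAt.mono fun _ hz => hz.differentiableAt) hhu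
  have hh : AnalyticAt 𝕜 h 0 := (analyticAt_id.fun_mul hu).congr hhu.symm
  set F := fun z => deriv h z * (u z)⁻¹ ^ (j + 1)
  set v := fun z => (u z)⁻¹ ^ j
  have hv : AnalyticAt 𝕜 v 0 := (hu.fun_inv hu0).fun_pow j
  have hF : AnalyticAt 𝕜 F 0 := hh.deriv.fun_mul ((hu.fun_inv hu0).fun_pow (j + 1))
  -- `z·d/dz` multiplies the `j`-th coefficient by `j`, so the two `v`-terms cancel.
  have key : (fun z => j * F z + z * deriv v z) =ᶠ[𝓝 0] fun z => j * v z := by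
    filter_upwards [hh', hu.eventually_analyticAt,
      hu.continuousAt.eventually_ne hu0] with z hz hua hz0
    obtain ⟨m, rfl⟩ := Nat.exists_eq_add_one_of_ne_zero hj
    rw [((hua.differentiableAt.hasDerivAt.fun_inv hz0).fun_pow (m + 1)).deriv]
    simp only [F, v, hz, Nat.add_sub_cancel, inv_pow]
    field_simp
    ring
  have := taylorCoeff_congr key j
  rw [taylorCoeff_add (analyticAt_const.fun_mul hF).contDiffAt
      (contDiffAt_fun_id.mul hv.deriv.contDiffAt),
    taylorCoeff_const_mul, taylorCoeff_const_mul, taylorCoeff_id_mul_deriv hv] at this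
  simpa [hj] using this

theorem taylorCoeff_comp_mul_deriv_mul_inv_pow {h u w : 𝕜 → 𝕜} (hu : AnalyticAt 𝕜 u 0)
    (hu0 : u 0 ≠ 0) (hhu : h =ᶠ[𝓝 0] fun z => z * u z) (hw : AnalyticAt 𝕜 w 0) (N : ℕ) :
    taylorCoeff (fun z => w (h z) * deriv h z * (u z)⁻¹ ^ (N + 1)) N = taylorCoeff w N := by
  have hh : AnalyticAt 𝕜 h 0 := (analyticAt_id.fun_mul hu).congr hhu.symm
  have h0 : h 0 = 0 := by simpa using hhu.eq_of_nhds
  induction N generalizing w with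
  | zero =>
    have hd0 : deriv h 0 = u 0 := by
      simpa using (deriv_eventuallyEq_of_eventuallyEq_id_mul
        (hu.eventually_analyticAt.mono fun _ hz => hz.differentiableAt) hhu).eq_of_nhds
    simp [taylorCoeff_zero, h0, hd0, hu0]
  | succ N ih =>
    obtain ⟨p, hp⟩ := hw
    set w₁ := dslope w 0
    have hw₁ : AnalyticAt 𝕜 w₁ 0 := hp.has_fpower_series_dslope_fslope.analyticAt
    have hw_eq : ∀ y, w 0 + y * w₁ y = w y := fun y => by
      simpa [eq_sub_iff_add_eq'] using sub_smul_dslope w 0 y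
    have hw₁h : AnalyticAt 𝕜 (fun z => w₁ (h z)) 0 := hw₁.fun_comp_of_eq hh h0
    set G := fun z => w₁ (h z) * deriv h z * (u z)⁻¹ ^ (N + 1)
    have hG : AnalyticAt 𝕜 G 0 := (hw₁h.fun_mul hh.deriv).fun_mul ((hu.fun_inv hu0).fun_pow _)
    set E := fun z => deriv h z * (u z)⁻¹ ^ (N + 2)
    have hE : AnalyticAt 𝕜 E 0 := hh.deriv.fun_mul ((hu.fun_inv hu0).fun_pow _)
    have hsplit : (fun z => w (h z) * deriv h z * (u z)⁻¹ ^ (N + 2)) =ᶠ[𝓝 0]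
        fun z => w 0 * E z + z * G z := by
      filter_upwards [hhu, hu.continuousAt.eventually_ne hu0] with z hz hz0
      rw [← hw_eq (h z)]
      simp only [E, G, hz, inv_pow]
      field_simp
      ring
    calc taylorCoeff (fun z => w (h z) * deriv h z * (u z)⁻¹ ^ (N + 2)) (N + 1)
        = w 0 * taylorCoeff E (N + 1) + taylorCoeff G N := by
          rw [taylorCoeff_congr hsplit, taylorCoeff_add (analyticAt_const.fun_mul hE).contDiffAt
            (contDiffAt_fun_id.mul hG.contDiffAt), taylorCoeff_const_mul,
            taylorCoeff_id_mul hG.contDiffAt]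
      _ = taylorCoeff w₁ N := by
          rw [taylorCoeff_deriv_mul_inv_pow_eq_zero hu hu0 hhu N.succ_ne_zero, mul_zero, zero_add,
            ih hw₁]
      _ = taylorCoeff (fun z => w 0 + z * w₁ z) (N + 1) := by
          rw [taylorCoeff_const_add, taylorCoeff_id_mul hw₁.contDiffAt]
      _ = taylorCoeff w (N + 1) := by simp only [hw_eq]

theorem succ_mul_taylorCoeff_comp_of_eq_id_mul_comp {h f g : 𝕜 → 𝕜}
    (hh : AnalyticAt 𝕜 h 0) (hf : AnalyticAt 𝕜 f 0) (hg : AnalyticAt 𝕜 g 0) (hf0 : f 0 ≠ 0)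
    (heq : ∀ᶠ z in 𝓝 0, h z = z * f (h z)) (N : ℕ) :
    (N + 1) * taylorCoeff (fun z => g (h z)) (N + 1) =
      taylorCoeff (fun z => deriv g z * f z ^ (N + 1)) N := by
  have h0 : h 0 = 0 := by simpa using heq.self_of_nhds
  have hfh : AnalyticAt 𝕜 (fun z => f (h z)) 0 := hf.fun_comp_of_eq hh h0
  have hfh0 : f (h 0) ≠ 0 := by rwa [h0]
  have hchain : deriv (fun z => g (h z)) =ᶠ[𝓝 0]
      fun z => deriv g (h z) * f (h z) ^ (N + 1) * deriv h z * (f (h z))⁻¹ ^ (N + 1) := by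
    have hgh : AnalyticAt 𝕜 g (h 0) := by rwa [h0]
    filter_upwards [hh.eventually_analyticAt,
      hh.continuousAt.tendsto.eventually hgh.eventually_analyticAt,
      hfh.continuousAt.eventually_ne hfh0] with z hhz hgz hfz
    rw [← Function.comp_def, deriv_comp z hgz.differentiableAt hhz.differentiableAt, inv_pow]
    field_simp
  rw [← taylorCoeff_deriv, taylorCoeff_congr hchain,
    ← taylorCoeff_comp_mul_deriv_mul_inv_pow hfh hfh0 heq (hg.deriv.fun_mul (hf.fun_pow _))]

end LagrangeInversion

open LagrangeInversion in
/-- Lagrange inversion formula: if `h(z) = z·f(h(z))` near `0` with `f(0) ≠ 0`,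
then for every `g` holomorphic at `0` and `n ≥ 1`,
`coef_n(g ∘ h) = coef_{n-1}(g' · f^n / n)`. -/
theorem stmt_7 (h f g : ℂ → ℂ)
    (hh : AnalyticAt ℂ h 0) (hf : AnalyticAt ℂ f 0) (hg : AnalyticAt ℂ g 0)
    (hf0 : f 0 ≠ 0) (heq : ∀ᶠ z in nhds (0 : ℂ), h z = z * f (h z))
    (n : ℕ) (hn : 1 ≤ n) :
    iteratedDeriv n (fun z => g (h z)) 0 / (n ! : ℂ) =
      iteratedDeriv (n - 1) (fun z => deriv g z * f z ^ n / n) 0 / ((n - 1)! : ℂ) := by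
  obtain ⟨N, rfl⟩ := Nat.exists_eq_add_of_le' hn
  change taylorCoeff (fun z => g (h z)) (N + 1) =
    taylorCoeff (fun z => deriv g z * f z ^ (N + 1) / ((N + 1 : ℕ) : ℂ)) N
  simp_rw [div_eq_inv_mul _ ((N + 1 : ℕ) : ℂ)]
  rw [taylorCoeff_const_mul, ← succ_mul_taylorCoeff_comp_of_eq_id_mul_comp hh hf hg hf0 heq,
    Nat.cast_succ, inv_mul_cancel_left₀ (Nat.cast_add_one_ne_zero N)]
end

section
/- Fix k ≥ 1 and positive integers q_1, …, q_k with sum N, and let a_j = (k+1) + (N − j) for 0 ≤ j ≤ N. Then as n → ∞, the quantity (n!/n^{n−1}) · (1/(q_1!⋯q_k!)) · (1/k!) · Σ_{j=0}^{N} binom(N,j)(−1)^{N−j} · (j/(n−a_j)) · (n−a_j)^{n−a_j−j}/(n−a_j−j)! converges to (1/(q_1!⋯q_k!)) · (1/k!) · e^{−(k+1)} · N · (1 − 1/e)^{N−1}. -/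
/-!
Since `n - a_j - j = n - B` with `B = k + 1 + N` for every `j ≤ N`, the `j`-th summand is `j` times
`n! / n^(n-1) · (n - a)^(n - B) / ((n - a) (n - B)!)` with `a = a_j`. This equals
`n.descFactorial B / n^B · (1 - a/n)^(n - B - 1)`, which tends to `e^{-a}`. Writing
`e^{-a_j} = e^{-(k+1)} (e^{-1})^(N-j)`, the limit of the sum is `e^{-(k+1)}` times
`∑ C(N,j) j x^(N-j)` at `x = -e^{-1}`, the derivative of `(y + x)^N` at `y = 1`, i.e. `N (1 + x)^(N-1)`.
-/

open scoped Nat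
open Asymptotics Filter Finset Real Topology

lemma tendsto_descFactorial_div_pow (B : ℕ) :
    Tendsto (fun n : ℕ => (n.descFactorial B : ℝ) / (n : ℝ) ^ B) atTop (𝓝 1) := by
  have hpos : ∀ᶠ n : ℕ in atTop, (n : ℝ) ^ B ≠ 0 :=
    (eventually_gt_atTop 0).mono fun n hn => by positivity
  exact (isEquivalent_iff_tendsto_one hpos).mp (isEquivalent_descFactorial B)

lemma tendsto_one_sub_div_pow_sub (a : ℝ) (c : ℕ) :
    Tendsto (fun n : ℕ => (1 - a / n) ^ (n - c)) atTop (𝓝 (exp (-a))) := by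
  have hbase : Tendsto (fun n : ℕ => 1 - a / n) atTop (𝓝 1) := by
    simpa using tendsto_const_nhds.sub (tendsto_const_div_atTop_nhds_zero_nat a)
  have hlim := (tendsto_one_add_div_pow_exp (-a)).div (hbase.pow c) (by norm_num)
  rw [one_pow, div_one] at hlim
  refine hlim.congr' ?_
  filter_upwards [eventually_ge_atTop c, hbase.eventually_ne one_ne_zero] with n hcn hn
  rw [Pi.div_apply, pow_sub₀ _ hn hcn, neg_div, ← sub_eq_add_neg, div_eq_mul_inv]

lemma tendsto_factorial_div_pow_mul_pow_div (a B : ℕ) :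
    Tendsto (fun n : ℕ => (n ! : ℝ) / (n : ℝ) ^ (n - 1) * ((n - a : ℕ) : ℝ) ^ (n - B)
      / (((n - a : ℕ) : ℝ) * (n - B)!)) atTop (𝓝 (exp (-a))) := by
  have hlim := (tendsto_descFactorial_div_pow B).mul (tendsto_one_sub_div_pow_sub a (B + 1))
  rw [one_mul] at hlim
  refine hlim.congr' ?_
  filter_upwards [eventually_gt_atTop (a + B)] with n hn
  have hn0 : (n : ℝ) ≠ 0 := by exact_mod_cast (show n ≠ 0 by omega)
  have hna : ((n - a : ℕ) : ℝ) ≠ 0 := by exact_mod_cast (show n - a ≠ 0 by omega)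
  have hsub : 1 - (a : ℝ) / n = ((n - a : ℕ) : ℝ) / n := by
    rw [Nat.cast_sub (by omega)]
    field_simp
  rw [hsub, div_pow, ← Nat.factorial_mul_descFactorial (show B ≤ n by omega), Nat.cast_mul,
    show n - 1 = B + (n - (B + 1)) by omega, show n - B = n - (B + 1) + 1 by omega, pow_add, pow_succ]
  field_simp

lemma sum_choose_mul_mul_pow {R : Type*} [CommSemiring R] (N : ℕ) (x : R) :
    ∑ j ∈ range (N + 1), (N.choose j : R) * j * x ^ (N - j) = N * (1 + x) ^ (N - 1) := by
  cases N with
  | zero => simp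
  | succ M =>
    rw [sum_range_succ', add_pow, mul_sum]
    simp only [Nat.cast_zero, mul_zero, zero_mul, add_zero, one_pow, one_mul, add_tsub_cancel_right]
    refine sum_congr rfl fun i _ => ?_
    have h := congrArg (Nat.cast (R := R)) (Nat.add_one_mul_choose_eq M i)
    push_cast at h ⊢
    rw [← h]
    ring

lemma sum_choose_mul_neg_one_pow_mul_exp (c : ℝ) (N : ℕ) :
    ∑ j ∈ range (N + 1), (N.choose j : ℝ) * (-1) ^ (N - j) * j * exp (-(c + (N - j : ℕ)))
      = exp (-c) * N * (1 - 1 / exp 1) ^ (N - 1) := by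
  have hterm : ∀ j ∈ range (N + 1), (N.choose j : ℝ) * (-1) ^ (N - j) * j * exp (-(c + (N - j : ℕ)))
      = exp (-c) * ((N.choose j : ℝ) * j * (-exp (-1)) ^ (N - j)) := by
    intro j _
    have hexp : exp (-((N - j : ℕ) : ℝ)) = exp (-1) ^ (N - j) := by
      rw [← exp_nat_mul, mul_neg_one]
    rw [neg_add, exp_add, hexp, neg_pow]
    ring
  rw [sum_congr rfl hterm, ← mul_sum, sum_choose_mul_mul_pow, exp_neg 1, ← sub_eq_add_neg, one_div]
  ring

theorem stmt_14_general (k : ℕ) (q : Fin k → ℕ)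
    (N : ℕ) (a : ℕ → ℕ) (ha : ∀ j, a j = (k + 1) + (N - j)) :
    Tendsto
      (fun n : ℕ =>
        ((n ! : ℝ) / (n : ℝ) ^ (n - 1)) * (1 / ∏ i, ((q i)! : ℝ)) * (1 / (k ! : ℝ)) *
          ∑ j ∈ Finset.range (N + 1),
            (N.choose j : ℝ) * (-1) ^ (N - j) * ((j : ℝ) / ((n - a j : ℕ) : ℝ)) *
              ((n - a j : ℕ) : ℝ) ^ (n - a j - j) / ((n - a j - j)! : ℝ))
      atTop
      (nhds ((1 / ∏ i, ((q i)! : ℝ)) * (1 / (k ! : ℝ)) *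
        Real.exp (-((k : ℝ) + 1)) * N * (1 - 1 / Real.exp 1) ^ (N - 1))) := by
  set B := k + 1 + N
  have hterm : ∀ j ∈ range (N + 1), Tendsto (fun n : ℕ => (N.choose j : ℝ) * (-1) ^ (N - j) * j *
      ((n ! : ℝ) / (n : ℝ) ^ (n - 1) * ((n - a j : ℕ) : ℝ) ^ (n - B)
        / (((n - a j : ℕ) : ℝ) * (n - B)!))) atTop
      (𝓝 ((N.choose j : ℝ) * (-1) ^ (N - j) * j * exp (-((k + 1 : ℝ) + (N - j : ℕ))))) := by
    intro j _
    have hexp : ((a j : ℕ) : ℝ) = (k + 1 : ℝ) + (N - j : ℕ) := by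
      rw [ha, Nat.cast_add, Nat.cast_succ]
    simpa only [hexp] using (tendsto_factorial_div_pow_mul_pow_div (a j) B).const_mul _
  have hlim := (tendsto_finsetSum _ hterm).const_mul ((1 / ∏ i, ((q i)! : ℝ)) * (1 / (k ! : ℝ)))
  rw [sum_choose_mul_neg_one_pow_mul_exp] at hlim
  convert hlim using 2 with n
  · rw [mul_sum, mul_sum]
    refine sum_congr rfl fun j hj => ?_
    have hj : j ≤ N := mem_range_succ_iff.mp hj
    rw [show n - a j - j = n - B by rw [ha]; omega]
    ring
  · ring

/-- Limiting probability of the class `𝒯^{(3)}_{n;k,q₁,…,q_k}` of rooted labeled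
trees whose root has `k` children with `q₁,…,q_k` children respectively and
root at distance `≥ 3` from every leaf. -/
theorem stmt_14 (k : ℕ) (hk : 1 ≤ k) (q : Fin k → ℕ) (hq : ∀ i, 1 ≤ q i)
    (N : ℕ) (hN : N = ∑ i, q i) (a : ℕ → ℕ) (ha : ∀ j, a j = (k + 1) + (N - j)) :
    Tendsto
      (fun n : ℕ =>
        ((n ! : ℝ) / (n : ℝ) ^ (n - 1)) * (1 / ∏ i, ((q i)! : ℝ)) * (1 / (k ! : ℝ)) *
          ∑ j ∈ Finset.range (N + 1),
            (N.choose j : ℝ) * (-1) ^ (N - j) * ((j : ℝ) / ((n - a j : ℕ) : ℝ)) *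
              ((n - a j : ℕ) : ℝ) ^ (n - a j - j) / ((n - a j - j)! : ℝ))
      atTop
      (nhds ((1 / ∏ i, ((q i)! : ℝ)) * (1 / (k ! : ℝ)) *
        Real.exp (-((k : ℝ) + 1)) * N * (1 - 1 / Real.exp 1) ^ (N - 1))) :=
  stmt_14_general k q N a ha
end

section
/- For fixed nonnegative integers a and j, the sequence (n!/n^{n−1}) · (1/(n−a)) · (n−a)^{n−a−j} / (n−a−j)! converges to e^{−a} as n → ∞. -/
/-!
Put `h n = n! / n ^ (n - 1)`. Then `h (n + 1) / h n = (1 + 1/n) ^ -(n - 1) → e⁻¹`, so by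
telescoping `h n / h (n - c) → e^(-c)`. With `k = n - a - j` the sequence equals
`h n / h k · (1 + j/k) ^ (k - 1)`, and the second factor tends to `e^j`.
-/

open scoped Nat Topology
open Filter

theorem tendsto_one_add_div_pow_pred_exp (x : ℝ) :
    Tendsto (fun k : ℕ => (1 + x / k) ^ (k - 1)) atTop (𝓝 (Real.exp x)) := by
  have hbase : Tendsto (fun k : ℕ => 1 + x / k) atTop (𝓝 1) := by
    simpa using (tendsto_const_div_atTop_nhds_zero_nat x).const_add 1
  have hquot := (Real.tendsto_one_add_div_pow_exp x).div hbase one_ne_zero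
  rw [div_one] at hquot
  refine hquot.congr' ?_
  filter_upwards [hbase.eventually_ne one_ne_zero, eventually_ge_atTop 1] with k hne hk
  rw [pow_sub₀ _ hne hk, pow_one]
  rfl

theorem tendsto_div_sub_of_tendsto_succ_div {K : Type*} [Field K] [TopologicalSpace K]
    [ContinuousMul K] {f : ℕ → K} {L : K} (hf : ∀ n, f n ≠ 0)
    (h : Tendsto (fun n => f (n + 1) / f n) atTop (𝓝 L)) (c : ℕ) :
    Tendsto (fun n => f n / f (n - c)) atTop (𝓝 (L ^ c)) := by
  induction c with
  | zero => simpa [div_self (hf _)] using tendsto_const_nhds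
  | succ c ih =>
    have hstep : Tendsto (fun n => f (n - c) / f (n - c - 1)) atTop (𝓝 L) := by
      refine (h.comp (tendsto_sub_atTop_nat (c + 1))).congr' ?_
      filter_upwards [eventually_ge_atTop (c + 1)] with n hn
      simp only [Function.comp, Nat.sub_add_eq, Nat.sub_add_cancel (by omega : 1 ≤ n - c)]
    rw [pow_succ]
    refine (ih.mul hstep).congr fun n => ?_
    rw [div_mul_div_cancel₀ (hf _), Nat.sub_add_eq]

noncomputable def factorialDivPowPred (n : ℕ) : ℝ := n ! / (n : ℝ) ^ (n - 1)

theorem factorialDivPowPred_pos (n : ℕ) : 0 < factorialDivPowPred n := by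
  rcases n with _ | n
  · simp [factorialDivPowPred]
  · unfold factorialDivPowPred; positivity

theorem factorialDivPowPred_succ_div (n : ℕ) :
    factorialDivPowPred (n + 1) / factorialDivPowPred n = ((1 + 1 / n : ℝ) ^ (n - 1))⁻¹ := by
  rcases n with _ | n
  · simp [factorialDivPowPred]
  · have hn : ((n + 1 : ℕ) : ℝ) ≠ 0 := by positivity
    rw [one_add_div hn, div_pow, inv_div]
    simp only [factorialDivPowPred, Nat.factorial_succ, add_tsub_cancel_right, Nat.cast_mul]
    field_simp
    push_cast
    ring

theorem tendsto_factorialDivPowPred_succ_div :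
    Tendsto (fun n => factorialDivPowPred (n + 1) / factorialDivPowPred n) atTop
      (𝓝 (Real.exp (-1))) := by
  simp only [factorialDivPowPred_succ_div, Real.exp_neg]
  exact (tendsto_one_add_div_pow_pred_exp 1).inv₀ (Real.exp_pos 1).ne'

theorem tendsto_factorialDivPowPred_div_sub (c : ℕ) :
    Tendsto (fun n => factorialDivPowPred n / factorialDivPowPred (n - c)) atTop
      (𝓝 (Real.exp (-c))) := by
  rw [← mul_neg_one, Real.exp_nat_mul]
  exact tendsto_div_sub_of_tendsto_succ_div (fun n => (factorialDivPowPred_pos n).ne')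
    tendsto_factorialDivPowPred_succ_div c

theorem add_pow_pred_div_factorial (k j : ℕ) (hk : k ≠ 0) :
    ((k + j : ℕ) : ℝ) ^ (k - 1) / k ! = (1 + j / k : ℝ) ^ (k - 1) / factorialDivPowPred k := by
  have hk' : (k : ℝ) ≠ 0 := by exact_mod_cast hk
  rw [factorialDivPowPred, one_add_div hk']
  push_cast
  rw [div_pow, div_div_eq_mul_div, div_mul_cancel₀ _ (pow_ne_zero _ hk')]

/-- For fixed `a, j ≥ 0`, `(n!/n^{n−1})·(1/(n−a))·(n−a)^{n−a−j}/(n−a−j)! → e^{−a}`. -/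
theorem stmt_15 (a j : ℕ) :
    Tendsto
      (fun n : ℕ =>
        ((n ! : ℝ) / (n : ℝ) ^ (n - 1)) * (1 / ((n - a : ℕ) : ℝ)) *
          ((n - a : ℕ) : ℝ) ^ (n - a - j) / ((n - a - j)! : ℝ))
      atTop (nhds (Real.exp (-(a : ℝ)))) := by
  have hlim := (tendsto_factorialDivPowPred_div_sub (a + j)).mul
    ((tendsto_one_add_div_pow_pred_exp j).comp (tendsto_sub_atTop_nat (a + j)))
  rw [← Real.exp_add, Nat.cast_add, neg_add, neg_add_cancel_right] at hlim
  refine hlim.congr' ?_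
  filter_upwards [eventually_gt_atTop (a + j)] with n hn
  obtain ⟨k, rfl⟩ : ∃ k, n = k + a + j := ⟨n - (a + j), by omega⟩
  have hk : k ≠ 0 := by omega
  rw [Function.comp_apply, show k + a + j - (a + j) = k by omega,
    show k + a + j - a = k + j by omega, Nat.add_sub_cancel_right]
  calc factorialDivPowPred (k + a + j) / factorialDivPowPred k * (1 + j / k : ℝ) ^ (k - 1)
      = factorialDivPowPred (k + a + j) * (((k + j : ℕ) : ℝ) ^ (k - 1) / k !) := by
        rw [add_pow_pred_div_factorial k j hk]; ring
    _ = _ := by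
        rw [← pow_sub_one_mul hk ((k + j : ℕ) : ℝ), factorialDivPowPred]
        field_simp
end

section
/- The double series Σ_{k≥1} Σ_{N≥k} e^{−(k+1)} S(N,k) (1−1/e)^{N−1}/(N−1)! converges and equals (1/e) e^{1−1/e} (1/e) e^{(e^{1−1/e}−1)/e}, i.e., c_3 = e^{−1} e^{−1/e} e^{(e^{1−1/e}−1)/e}. -/
open scoped Nat

/-- Stirling numbers of the second kind. -/
def stirling : ℕ → ℕ → ℕ
  | 0, 0 => 1
  | 0, _ + 1 => 0
  | _ + 1, 0 => 0
  | n + 1, k + 1 => (k + 1) * stirling n (k + 1) + stirling n k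

/-!
Write `Δ` for the forward difference with step `1`. The recurrence for `S(n, k)` and the discrete
Leibniz rule `Δ^[k+1] (r ↦ r * f r) 0 = (k + 1) * Δ^[k] f 1` give `k! S(n, k) = Δ^[k] (r ↦ r ^ n) 0`,
hence `k! S(m + 1, k + 1) = Δ^[k] (r ↦ r ^ m) 1`. Summing against `x ^ m / m!` replaces `r ^ m` by
`exp (r x)`, an additive character, whose `k`-th difference at `1` is `exp x (exp x - 1) ^ k`.
So for fixed `k ≥ 1` the series over `N` sums to `y ^ (k + 1) exp x (exp x - 1) ^ (k - 1) / (k - 1)!`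
(here `y = e⁻¹`, `x = 1 - e⁻¹`), the series over `k` is then an exponential series, and for
nonnegative terms the iterated sum is the double sum.
-/

open Finset Function fwdDiff

theorem stirling_eq_stirlingSecond : stirling = Nat.stirlingSecond := by
  funext n k
  induction n generalizing k with
  | zero => cases k <;> rfl
  | succ n ih => cases k <;> simp [stirling, Nat.stirlingSecond_succ_succ, ih]

section fwdDiff

variable {M G : Type*} [AddCommMonoid M] [AddCommGroup G]

theorem fwdDiff_iter_apply_add_self (h : M) (f : M → G) (k : ℕ) (y : M) :
    Δ_[h] ^[k] f (y + h) = Δ_[h] ^[k] f y + Δ_[h] ^[k + 1] f y := by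
  rw [iterate_succ_apply', fwdDiff]
  abel

variable {R : Type*} [CommRing R]

theorem fwdDiff_iter_succ_id_mul (f : R → R) (k : ℕ) (y : R) :
    Δ_[1] ^[k + 1] (fun r ↦ r * f r) y =
      y * Δ_[1] ^[k + 1] f y + (k + 1) * Δ_[1] ^[k] f (y + 1) := by
  induction k generalizing f y with
  | zero =>
    simp only [zero_add, iterate_one, iterate_zero_apply, fwdDiff, Nat.cast_zero]
    ring
  | succ k ih =>
    have hΔ : Δ_[1] (fun r ↦ r * f r) = (fun r ↦ r * Δ_[1] f r) + fun r ↦ f (r + 1) := by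
      funext r
      simp only [fwdDiff, Pi.add_apply]
      ring
    rw [iterate_succ_apply, hΔ, fwdDiff_iter_add, Pi.add_apply, ih, fwdDiff_iter_comp_add]
    simp only [← iterate_succ_apply, Nat.succ_eq_add_one]
    push_cast
    ring

end fwdDiff

theorem factorial_mul_stirling {R : Type*} [CommRing R] (n k : ℕ) :
    (k ! * stirling n k : R) = Δ_[1] ^[k] (fun r : R ↦ r ^ n) 0 := by
  induction n generalizing k with
  | zero =>
    cases k with
    | zero => simp [stirling]
    | succ k => rw [fwdDiff_iter_pow_eq_zero_of_lt (Nat.succ_pos k)]; simp [stirling]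
  | succ n ih =>
    cases k with
    | zero => simp [stirling]
    | succ k =>
      have hpow : (fun r : R ↦ r ^ (n + 1)) = fun r ↦ r * r ^ n := funext fun r ↦ pow_succ' r n
      rw [hpow, fwdDiff_iter_succ_id_mul, zero_mul, zero_add, fwdDiff_iter_apply_add_self, ← ih, ← ih, stirling,
        Nat.factorial_succ]
      push_cast
      ring

theorem factorial_mul_stirling_succ_succ {R : Type*} [CommRing R] (n k : ℕ) :
    (k ! * stirling (n + 1) (k + 1) : R) = Δ_[1] ^[k] (fun r : R ↦ r ^ n) 1 := by
  have hshift := fwdDiff_iter_apply_add_self (1 : R) (fun r : R ↦ r ^ n) k 0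
  rw [zero_add] at hshift
  rw [hshift, ← factorial_mul_stirling, ← factorial_mul_stirling, stirling, Nat.factorial_succ]
  push_cast
  ring

theorem Real.hasSum_pow_div_factorial (x : ℝ) : HasSum (fun n ↦ x ^ n / n !) (Real.exp x) :=
  Real.exp_eq_exp_ℝ ▸ NormedSpace.expSeries_div_hasSum_exp x

theorem hasSum_fwdDiff_iter_pow_mul_pow_div_factorial (k : ℕ) (x y : ℝ) :
    HasSum (fun m : ℕ ↦ Δ_[1] ^[k] (fun r : ℝ ↦ r ^ m) y * x ^ m / m !)
      ((Real.exp x - 1) ^ k * Real.exp (y * x)) := by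
  let ψ : AddChar ℝ ℝ :=
    ⟨fun r ↦ Real.exp (r * x), by simp, fun a b ↦ by simp [add_mul, Real.exp_add]⟩
  have hψ : Δ_[1] ^[k] ψ y = (Real.exp x - 1) ^ k * Real.exp (y * x) := by
    simpa [ψ] using fwdDiff_addChar_eq ψ y 1 k
  rw [← hψ, fwdDiff_iter_eq_sum_shift]
  simp_rw [fwdDiff_iter_eq_sum_shift, sum_mul, sum_div]
  refine hasSum_sum fun j _ ↦ ?_
  convert (Real.hasSum_pow_div_factorial ((y + j • 1) * x)).const_smul
    ((-1 : ℤ) ^ (k - j) * k.choose j) using 1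
  · funext m
    simp only [zsmul_eq_mul, mul_pow]
    ring
  · rfl

theorem hasSum_stirling_succ_mul_pow_div_factorial (x : ℝ) (k : ℕ) :
    HasSum (fun m : ℕ ↦ (stirling (m + 1) (k + 1) : ℝ) * x ^ m / m !)
      (Real.exp x * (Real.exp x - 1) ^ k / k !) := by
  have hval : Real.exp x * (Real.exp x - 1) ^ k / k ! =
      (Real.exp x - 1) ^ k * Real.exp (1 * x) / k ! := by
    rw [one_mul]
    ring
  rw [hval]
  refine ((hasSum_fwdDiff_iter_pow_mul_pow_div_factorial k x 1).div_const _).congr_fun fun m ↦ ?_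
  rw [← factorial_mul_stirling_succ_succ]
  field_simp

theorem hasSum_prod_of_nonneg {α β : Type*} {f : α × β → ℝ} (hf : 0 ≤ f) {g : α → ℝ} {a : ℝ}
    (hfg : ∀ x, HasSum (fun y ↦ f (x, y)) (g x)) (hg : HasSum g a) : HasSum f a := by
  have hs : Summable f := (summable_prod_of_nonneg hf).2
    ⟨fun x ↦ (hfg x).summable, by simpa only [(hfg _).tsum_eq] using hg.summable⟩
  convert hs.hasSum
  rw [hs.tsum_prod' fun x ↦ (hfg x).summable]
  simp_rw [(hfg _).tsum_eq]
  exact hg.tsum_eq.symm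

theorem hasSum_pow_mul_stirling_mul_pow_div_factorial {x y : ℝ} (hx : 0 ≤ x) (hy : 0 ≤ y) :
    HasSum (fun p : ℕ × ℕ ↦
      if 1 ≤ p.1 ∧ p.1 ≤ p.2 then
        y ^ (p.1 + 1) * (stirling p.2 p.1 : ℝ) * x ^ (p.2 - 1) / ((p.2 - 1)! : ℝ)
      else 0)
      (y ^ 2 * Real.exp x * Real.exp (y * (Real.exp x - 1))) := by
  refine hasSum_prod_of_nonneg (fun p ↦ by dsimp only; split_ifs <;> positivity)
    (g := fun | 0 => 0 | k + 1 => y ^ (k + 2) * (Real.exp x * (Real.exp x - 1) ^ k / k !))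
    ?_ ?_
  · rintro (_ | k)
    · simp [hasSum_zero]
    · refine (hasSum_nat_add_iff' 1).mp ?_
      dsimp only
      rw [sum_range_one, if_neg (show ¬(1 ≤ k + 1 ∧ k + 1 ≤ 0) by omega), sub_zero]
      refine ((hasSum_stirling_succ_mul_pow_div_factorial x k).mul_left _).congr_fun fun m ↦ ?_
      split_ifs with h
      · simp only [Nat.add_sub_cancel]
        ring
      · rw [stirling_eq_stirlingSecond, Nat.stirlingSecond_eq_zero_of_lt (by omega)]
        simp
  · refine (hasSum_nat_add_iff' 1).mp ?_
    simp only [sum_range_one, sub_zero]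
    refine ((Real.hasSum_pow_div_factorial (y * (Real.exp x - 1))).mul_left
      (y ^ 2 * Real.exp x)).congr_fun fun k ↦ ?_
    rw [mul_pow]
    ring

/-- The double series `∑_{k≥1} ∑_{N≥k} e^{−(k+1)} S(N,k) (1−1/e)^{N−1}/(N−1)!`
converges, with sum `c₃ = e^{−1} e^{−1/e} e^{(e^{1−1/e}−1)/e}`.
Here `p = (k, N)`. -/
theorem stmt_16 :
    Summable (fun p : ℕ × ℕ =>
      if 1 ≤ p.1 ∧ p.1 ≤ p.2 then
        Real.exp (-((p.1 : ℝ) + 1)) * (stirling p.2 p.1 : ℝ) *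
          (1 - 1 / Real.exp 1) ^ (p.2 - 1) / ((p.2 - 1)! : ℝ)
      else 0) ∧
    ∑' p : ℕ × ℕ,
        (if 1 ≤ p.1 ∧ p.1 ≤ p.2 then
          Real.exp (-((p.1 : ℝ) + 1)) * (stirling p.2 p.1 : ℝ) *
            (1 - 1 / Real.exp 1) ^ (p.2 - 1) / ((p.2 - 1)! : ℝ)
        else 0) =
      Real.exp (-1) * Real.exp (-(1 / Real.exp 1)) *
        Real.exp ((Real.exp (1 - 1 / Real.exp 1) - 1) / Real.exp 1) := by
  have hx : 0 ≤ 1 - 1 / Real.exp 1 :=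
    sub_nonneg.2 ((div_le_one (Real.exp_pos 1)).2 (Real.one_le_exp zero_le_one))
  have hsum := hasSum_pow_mul_stirling_mul_pow_div_factorial hx (Real.exp_pos (-1)).le
  have hexp (k : ℕ) : Real.exp (-((k : ℝ) + 1)) = Real.exp (-1) ^ (k + 1) := by
    rw [← Real.exp_nat_mul]
    push_cast
    ring_nf
  have hval : Real.exp (-1) ^ 2 * Real.exp (1 - 1 / Real.exp 1) *
      Real.exp (Real.exp (-1) * (Real.exp (1 - 1 / Real.exp 1) - 1)) =
      Real.exp (-1) * Real.exp (-(1 / Real.exp 1)) *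
        Real.exp ((Real.exp (1 - 1 / Real.exp 1) - 1) / Real.exp 1) := by
    rw [sub_eq_add_neg 1 (1 / Real.exp 1), Real.exp_add 1, Real.exp_neg 1]
    field_simp
  simp_rw [hexp, ← hval]
  exact ⟨hsum.summable, hsum.tsum_eq⟩
end
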